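/- arXiv:2002.07352 — 3 statements merged into one kernel-verified Lean document; each statement's English description precedes it below -/
import Mathlib

section
/- The function W(x) = (1 + |x|²/3)^{-1/2} on ℝ³ satisfies the elliptic equation ΔW = -W⁵. -/
/-!
Write `W x = g ‖x‖²` with `g t = (1 + t/3)^(-1/2)`. Along a unit direction `e` the chain rule
gives `∂²_e (g ∘ ‖·‖²)(x) = 4 ⟪x, e⟫² g''(‖x‖²) + 2 g'(‖x‖²)`, and summing over an orthonormal
basis of `ℝⁿ` yields the radial formula `Δ(g ∘ ‖·‖²) = 4 r g''(r) + 2 n g'(r)` at `r = ‖x‖²`.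
For `n = 3` and this `g` the right-hand side is
`(1 + r/3)^(-5/2) (r/3 - (1 + r/3)) = -(1 + r/3)^(-5/2) = -W⁵`.
-/

open RealInnerProductSpace

section

variable {E : Type*} [NormedAddCommGroup E] [InnerProductSpace ℝ E]

theorem hasDerivAt_norm_add_smul_sq {x e : E} (he : ‖e‖ = 1) (s : ℝ) :
    HasDerivAt (fun s : ℝ => ‖x + s • e‖ ^ 2) (2 * (⟪x, e⟫ + s)) s := by
  refine (((hasDerivAt_id s).smul_const e).const_add x).norm_sq.congr_deriv ?_
  rw [id, one_smul, inner_add_left, real_inner_smul_left, real_inner_self_eq_norm_sq, he]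
  ring

theorem iteratedDeriv_two_comp_norm_add_smul_sq {g g' g'' : ℝ → ℝ}
    (hg : ∀ t, 0 ≤ t → HasDerivAt g (g' t) t) (hg' : ∀ t, 0 ≤ t → HasDerivAt g' (g'' t) t)
    (x : E) {e : E} (he : ‖e‖ = 1) :
    iteratedDeriv 2 (fun s : ℝ => g (‖x + s • e‖ ^ 2)) 0
      = 4 * ⟪x, e⟫ ^ 2 * g'' (‖x‖ ^ 2) + 2 * g' (‖x‖ ^ 2) := by
  have hfirst : deriv (fun s : ℝ => g (‖x + s • e‖ ^ 2))
      = fun s => g' (‖x + s • e‖ ^ 2) * (2 * (⟪x, e⟫ + s)) := by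
    funext s
    exact ((hg (‖x + s • e‖ ^ 2) (sq_nonneg _)).comp s (hasDerivAt_norm_add_smul_sq he s)).deriv
  have hsecond : HasDerivAt (fun s : ℝ => g' (‖x + s • e‖ ^ 2) * (2 * (⟪x, e⟫ + s)))
      (4 * ⟪x, e⟫ ^ 2 * g'' (‖x‖ ^ 2) + 2 * g' (‖x‖ ^ 2)) 0 := by
    have h := ((hg' (‖x + (0 : ℝ) • e‖ ^ 2) (sq_nonneg _)).comp 0
      (hasDerivAt_norm_add_smul_sq he 0)).fun_mul
        (((hasDerivAt_id' 0).const_add ⟪x, e⟫).const_mul 2)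
    simp only [Function.comp_apply, zero_smul, add_zero] at h
    exact h.congr_deriv (by ring)
  rw [iteratedDeriv_succ, iteratedDeriv_one, hfirst, hsecond.deriv]

theorem sum_iteratedDeriv_two_comp_norm_add_smul_sq {ι : Type*} [Fintype ι]
    {g g' g'' : ℝ → ℝ}
    (hg : ∀ t, 0 ≤ t → HasDerivAt g (g' t) t) (hg' : ∀ t, 0 ≤ t → HasDerivAt g' (g'' t) t)
    (b : OrthonormalBasis ι ℝ E) (x : E) :
    ∑ i, iteratedDeriv 2 (fun s : ℝ => g (‖x + s • b i‖ ^ 2)) 0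
      = 4 * ‖x‖ ^ 2 * g'' (‖x‖ ^ 2) + 2 * Fintype.card ι * g' (‖x‖ ^ 2) := by
  simp only [iteratedDeriv_two_comp_norm_add_smul_sq hg hg' x (b.orthonormal.1 _),
    Finset.sum_add_distrib, ← Finset.sum_mul, ← Finset.mul_sum, b.sum_sq_inner_left,
    Finset.sum_const, Finset.card_univ, nsmul_eq_mul]
  ring

end

theorem hasDerivAt_one_add_div_rpow {a t : ℝ} (p : ℝ) (ht : 0 < 1 + t / a) :
    HasDerivAt (fun t : ℝ => (1 + t / a) ^ p) (p / a * (1 + t / a) ^ (p - 1)) t := by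
  refine (((hasDerivAt_id t).div_const a).const_add 1).rpow_const (Or.inl ht.ne')
    |>.congr_deriv ?_
  simp only [id]
  ring

/-- The ground state `W(x) = (1 + ‖x‖²/3)^{-1/2}` on `ℝ³` satisfies `ΔW = -W⁵`,
where the Laplacian is written as the sum of second derivatives in the coordinate
directions. -/
theorem ground_state_elliptic_equation
    (W : EuclideanSpace ℝ (Fin 3) → ℝ)
    (hW : ∀ x, W x = (1 + ‖x‖ ^ 2 / 3) ^ (-(1:ℝ)/2)) :
    ∀ x : EuclideanSpace ℝ (Fin 3),
      (∑ i : Fin 3,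
          iteratedDeriv 2 (fun s : ℝ => W (x + s • EuclideanSpace.single i (1:ℝ))) 0)
        = -(W x) ^ 5 := by
  intro x
  have hpos : ∀ t : ℝ, 0 ≤ t → 0 < 1 + t / 3 := fun t ht => by positivity
  have hg := fun t ht => hasDerivAt_one_add_div_rpow (a := 3) (t := t) (-(1:ℝ)/2) (hpos t ht)
  have hg' := fun t ht =>
    (hasDerivAt_one_add_div_rpow (a := 3) (t := t) (-(1:ℝ)/2 - 1) (hpos t ht)).const_mul
      (-(1:ℝ)/2 / 3)
  have hlap := sum_iteratedDeriv_two_comp_norm_add_smul_sq hg hg' (EuclideanSpace.basisFun _ ℝ) x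
  simp only [EuclideanSpace.basisFun_apply, ← hW, Fintype.card_fin] at hlap
  set u := 1 + ‖x‖ ^ 2 / 3 with hu
  have hu0 : 0 < u := hpos _ (sq_nonneg _)
  have hW5 : W x ^ 5 = u ^ (-(5:ℝ)/2) := by
    rw [hW, ← Real.rpow_mul_natCast hu0.le]
    norm_num
  have hexp3 : u ^ (-(1:ℝ)/2 - 1) = u * u ^ (-(5:ℝ)/2) := by
    rw [← Real.rpow_one_add' hu0.le (by norm_num)]
    norm_num
  rw [hlap, hW5, hexp3, show -(1:ℝ)/2 - 1 - 1 = -(5:ℝ)/2 by norm_num]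
  linear_combination (-(u ^ (-(5:ℝ)/2)) / 3) * hu
end

section
/- Let f ∈ H^s_rad(ℝ³) and let s' > s with f ∉ H^{s'}(ℝ³). Then the radial randomization f^ω satisfies ‖f^ω‖_{H^{s'}} = ∞ almost surely. -/
open MeasureTheory ProbabilityTheory Filter Finset Real
open scoped ENNReal Topology

/-!
On the Fourier side, `‖f^ω‖²_{H^{s'}} = ∑ₙ Xₙ(ω)² aₙ`, where `aₙ` is the `H^{s'}` mass of `f` on
the shell `n ≤ |ξ| < n + 1`, and `∑ₙ aₙ = ‖f‖²_{H^{s'}} = ∞`. If some `aₙ = ∞` we are done since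
`Xₙ ≠ 0` almost surely. Otherwise `Zₙ = min (Xₙ², 1) · min (aₙ, 1)` are independent, `[0, 1]`-valued,
with `∑ₙ 𝔼 Zₙ = ∞`, and a Laplace transform argument shows `∑ₙ Zₙ = ∞` almost surely: by convexity
`e^{-t} ≤ 1 - κ t` on `[0, 1]` with `κ = 1 - e⁻¹`, so independence gives
`𝔼 e^{-∑_{n<N} Zₙ} ≤ e^{-κ ∑_{n<N} 𝔼 Zₙ} → 0`.
-/

lemma Real.exp_neg_le_one_sub_mul {t : ℝ} (h0 : 0 ≤ t) (h1 : t ≤ 1) :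
    exp (-t) ≤ 1 - (1 - exp (-1)) * t := by
  have := convexOn_exp.2 (Set.mem_univ (-1)) (Set.mem_univ 0) h0 (sub_nonneg.2 h1) (by ring)
  simp only [smul_eq_mul, mul_neg, mul_one, mul_zero, add_zero, exp_zero] at this
  linarith

lemma ENNReal.tsum_min_one_eq_top {ι : Type*} {a : ι → ℝ≥0∞} (ha : ∀ i, a i ≠ ⊤)
    (h : ∑' i, a i = ⊤) : ∑' i, min (a i) 1 = ⊤ := by
  by_contra hne
  have hfin := ENNReal.finite_const_le_of_tsum_ne_top hne one_ne_zero
  have hle : ∀ i, a i ≤ min (a i) 1 + if 1 ≤ min (a i) 1 then a i else 0 := by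
    intro i
    split_ifs with hi
    · exact le_add_self
    · rw [add_zero, min_eq_left (not_le.1 (mt (le_min · le_rfl) hi)).le]
  have htail : ∑' i, (if 1 ≤ min (a i) 1 then a i else 0) = ∑ i ∈ hfin.toFinset, a i := by
    rw [tsum_eq_sum (s := hfin.toFinset) fun i hi => if_neg (by simpa using hi)]
    exact sum_congr rfl fun i hi => if_pos (by simpa using hi)
  refine (ENNReal.add_ne_top.2 ⟨hne, ENNReal.sum_ne_top.2 fun i _ => ha i⟩ :
    ∑' i, min (a i) 1 + ∑ i ∈ hfin.toFinset, a i ≠ ⊤) (top_unique ?_)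
  calc ⊤ = ∑' i, a i := h.symm
    _ ≤ ∑' i, (min (a i) 1 + if 1 ≤ min (a i) 1 then a i else 0) := ENNReal.tsum_le_tsum hle
    _ = _ := by rw [ENNReal.tsum_add, htail]

section IndependentSums

variable {Ω : Type*} [MeasurableSpace Ω] {μ : Measure Ω}

lemma lintegral_ofReal_exp_neg_le [IsProbabilityMeasure μ] {Y : Ω → ℝ} (hY : Measurable Y)
    (h0 : ∀ ω, 0 ≤ Y ω) (h1 : ∀ ω, Y ω ≤ 1) :
    ∫⁻ ω, ENNReal.ofReal (exp (-Y ω)) ∂μ ≤ ENNReal.ofReal (exp (-((1 - exp (-1)) * μ[Y]))) := by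
  have hY_int : Integrable Y μ := (integrable_const 1).mono' hY.aestronglyMeasurable
    (ae_of_all _ fun ω => by simpa [abs_of_nonneg (h0 ω)] using h1 ω)
  have hexp_int : Integrable (fun ω => exp (-Y ω)) μ := (integrable_const 1).mono' (by fun_prop)
    (ae_of_all _ fun ω => by simpa using h0 ω)
  rw [← ofReal_integral_eq_lintegral_ofReal hexp_int (ae_of_all _ fun ω => (exp_pos _).le)]
  refine ENNReal.ofReal_le_ofReal ?_
  calc ∫ ω, exp (-Y ω) ∂μ ≤ ∫ ω, 1 - (1 - exp (-1)) * Y ω ∂μ :=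
        integral_mono hexp_int ((integrable_const 1).sub (hY_int.const_mul _))
          fun ω => exp_neg_le_one_sub_mul (h0 ω) (h1 ω)
    _ = 1 - (1 - exp (-1)) * μ[Y] := by
        rw [integral_sub (integrable_const 1) (hY_int.const_mul _), integral_const_mul]
        simp
    _ ≤ exp (-((1 - exp (-1)) * μ[Y])) := by linarith [add_one_le_exp (-((1 - exp (-1)) * μ[Y]))]

variable {ι : Type*} {Z : ι → Ω → ℝ}

lemma lintegral_ofReal_exp_neg_sum_le (hZ : iIndepFun Z μ) (hZm : ∀ i, Measurable (Z i))
    (h0 : ∀ i ω, 0 ≤ Z i ω) (h1 : ∀ i ω, Z i ω ≤ 1) (s : Finset ι) :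
    ∫⁻ ω, ENNReal.ofReal (exp (-∑ i ∈ s, Z i ω)) ∂μ ≤
      ENNReal.ofReal (exp (-((1 - exp (-1)) * ∑ i ∈ s, μ[Z i]))) := by
  have := hZ.isProbabilityMeasure
  have hV : iIndepFun (fun i ω => ENNReal.ofReal (exp (-Z i ω))) μ :=
    hZ.comp (fun _ x => ENNReal.ofReal (exp (-x))) fun _ => by fun_prop
  calc ∫⁻ ω, ENNReal.ofReal (exp (-∑ i ∈ s, Z i ω)) ∂μ
        = ∫⁻ ω, ∏ i ∈ s, ENNReal.ofReal (exp (-Z i ω)) ∂μ := by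
          simp_rw [← sum_neg_distrib, exp_sum,
            ENNReal.ofReal_prod_of_nonneg fun i _ => (exp_pos _).le]
      _ = ∏ i ∈ s, ∫⁻ ω, ENNReal.ofReal (exp (-Z i ω)) ∂μ :=
          lintegral_prod_eq_prod_lintegral_of_indepFun s _ hV fun i => by fun_prop
      _ ≤ ∏ i ∈ s, ENNReal.ofReal (exp (-((1 - exp (-1)) * μ[Z i]))) :=
          prod_le_prod' fun i _ => lintegral_ofReal_exp_neg_le (hZm i) (h0 i) (h1 i)
      _ = ENNReal.ofReal (exp (-((1 - exp (-1)) * ∑ i ∈ s, μ[Z i]))) := by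
          rw [← ENNReal.ofReal_prod_of_nonneg fun i _ => (exp_pos _).le, ← exp_sum, mul_sum,
            sum_neg_distrib]

theorem ProbabilityTheory.iIndepFun.ae_not_summable {Z : ℕ → Ω → ℝ} (hZ : iIndepFun Z μ)
    (hZm : ∀ n, Measurable (Z n)) (h0 : ∀ n ω, 0 ≤ Z n ω) (h1 : ∀ n ω, Z n ω ≤ 1)
    (hsum : ¬Summable fun n => μ[Z n]) :
    ∀ᵐ ω ∂μ, ¬Summable fun n => Z n ω := by
  have hκ : 0 < 1 - exp (-1) := sub_pos.2 (exp_lt_one_iff.2 (by norm_num))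
  have hmean : Tendsto (fun N => ∑ n ∈ range N, μ[Z n]) atTop atTop :=
    (not_summable_iff_tendsto_nat_atTop_of_nonneg fun n => integral_nonneg (h0 n)).1 hsum
  have hbound : Tendsto (fun N => ENNReal.ofReal (exp (-((1 - exp (-1)) *
      ∑ n ∈ range N, μ[Z n])))) atTop (𝓝 0) := by
    simpa using (ENNReal.tendsto_ofReal (tendsto_exp_atBot.comp
      (tendsto_neg_atTop_atBot.comp (hmean.const_mul_atTop hκ))))
  have hinf : ∀ᵐ ω ∂μ, ⨅ N, ENNReal.ofReal (exp (-∑ n ∈ range N, Z n ω)) = 0 := by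
    refine (lintegral_eq_zero_iff (Measurable.iInf fun N => by fun_prop)).1
      (le_antisymm (ge_of_tendsto' hbound fun N => ?_) bot_le)
    exact (lintegral_mono fun ω => iInf_le _ N).trans
      (lintegral_ofReal_exp_neg_sum_le hZ hZm h0 h1 _)
  filter_upwards [hinf] with ω hω hsummable
  refine (ENNReal.ofReal_pos.2 (exp_pos (-∑' n, Z n ω))).ne' (le_antisymm ?_ bot_le)
  exact hω ▸ le_iInf fun N => ENNReal.ofReal_le_ofReal (exp_le_exp.2 (neg_le_neg
    (hsummable.sum_le_tsum _ fun n _ => h0 n ω)))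

end IndependentSums

lemma integral_min_sq_one_pos (ν : Measure ℝ) [IsProbabilityMeasure ν] [NullSingletonClass ν] :
    0 < ∫ x, min (x ^ 2) 1 ∂ν := by
  have hint : Integrable (fun x : ℝ => min (x ^ 2) 1) ν := (integrable_const 1).mono' (by fun_prop)
    (ae_of_all _ fun x => by simp [abs_of_nonneg (le_min (sq_nonneg x) zero_le_one)])
  have hsupp : Function.support (fun x : ℝ => min (x ^ 2) 1) = {0}ᶜ := by
    ext x
    simp only [Function.mem_support, Set.mem_compl_iff, Set.mem_singleton_iff]
    refine ⟨fun h hx => h (by simp [hx]), fun hx => (lt_min (by positivity) one_pos).ne'⟩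
  rw [integral_pos_iff_support_of_nonneg (fun x => by positivity) hint, hsupp,
    measure_compl (measurableSet_singleton 0) (measure_ne_top _ _), measure_singleton]
  simp

section IdenticallyDistributed

variable {Ω : Type*} [MeasurableSpace Ω] {μ : Measure Ω} {X : ℕ → Ω → ℝ} {ν : Measure ℝ}
  [NullSingletonClass ν]

lemma ae_tsum_ofReal_sq_mul_eq_top_of_ne_top (hXm : ∀ n, Measurable (X n))
    (hX : iIndepFun X μ) (hν : ∀ n, μ.map (X n) = ν) {a : ℕ → ℝ≥0∞} (ha : ∀ n, a n ≠ ⊤)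
    (hsum : ∑' n, a n = ⊤) :
    ∀ᵐ ω ∂μ, ∑' n, ENNReal.ofReal (X n ω ^ 2) * a n = ⊤ := by
  have := hX.isProbabilityMeasure
  have : IsProbabilityMeasure ν := hν 0 ▸ Measure.isProbabilityMeasure_map (hXm 0).aemeasurable
  set r : ℕ → ℝ := fun n => (min (a n) 1).toReal
  have hr_le : ∀ n, r n ≤ 1 := fun n => ENNReal.toReal_le_of_le_ofReal zero_le_one (by simp)
  set Z : ℕ → Ω → ℝ := fun n ω => min (X n ω ^ 2) 1 * r n
  have hZ0 : ∀ n ω, 0 ≤ Z n ω := fun n ω => by positivity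
  have hZmean : ∀ n, μ[Z n] = (∫ x, min (x ^ 2) 1 ∂ν) * r n := fun n => by
    rw [integral_mul_const, ← hν n, integral_map (hXm n).aemeasurable (by fun_prop)]
  have hr : ¬Summable r := fun hr => hr.tsum_ofReal_ne_top <| by
    simpa [r, ENNReal.ofReal_toReal] using ENNReal.tsum_min_one_eq_top ha hsum
  have hZ : iIndepFun Z μ := hX.comp (fun n x => min (x ^ 2) 1 * r n) fun n => by fun_prop
  have hmean : ¬Summable fun n => μ[Z n] := by
    simpa only [hZmean] using (summable_mul_left_iff (integral_min_sq_one_pos ν).ne').not.2 hr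
  filter_upwards [hZ.ae_not_summable (fun n => by fun_prop) hZ0
    (fun n ω => mul_le_one₀ (min_le_right _ _) ENNReal.toReal_nonneg (hr_le n)) hmean] with ω hω
  have hZω : ∑' n, ENNReal.ofReal (Z n ω) = ⊤ :=
    ENNReal.tsum_coe_eq_top_iff_not_summable_coe.2 (by simpa [Real.coe_toNNReal _ (hZ0 _ ω)])
  refine top_unique (hZω ▸ ENNReal.tsum_le_tsum fun n => ?_)
  rw [ENNReal.ofReal_mul (by positivity), ENNReal.ofReal_toReal (by simp [ha n])]
  exact mul_le_mul' (ENNReal.ofReal_le_ofReal (min_le_left _ _)) (min_le_left _ _)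

theorem ae_tsum_ofReal_sq_mul_eq_top (hXm : ∀ n, Measurable (X n)) (hX : iIndepFun X μ)
    (hν : ∀ n, μ.map (X n) = ν) {a : ℕ → ℝ≥0∞} (hsum : ∑' n, a n = ⊤) :
    ∀ᵐ ω ∂μ, ∑' n, ENNReal.ofReal (X n ω ^ 2) * a n = ⊤ := by
  by_cases ha : ∃ n, a n = ⊤
  · obtain ⟨n, hn⟩ := ha
    have hX0 : μ (X n ⁻¹' {0}) = 0 := by
      rw [← Measure.map_apply (hXm n) (measurableSet_singleton 0), hν, measure_singleton]
    filter_upwards [measure_eq_zero_iff_ae_notMem.1 hX0] with ω hω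
    refine top_unique (le_of_eq_of_le ?_ (ENNReal.le_tsum n))
    rw [hn, ENNReal.mul_top (by simpa using hω)]
  · exact ae_tsum_ofReal_sq_mul_eq_top_of_ne_top hXm hX hν (not_exists.1 ha) hsum

end IdenticallyDistributed

lemma tsum_ite_floor_eq {M : Type*} [AddCommMonoid M] [TopologicalSpace M] {r : ℝ} (hr : 0 ≤ r)
    (x : ℕ → M) : ∑' n : ℕ, (if (n : ℝ) ≤ r ∧ r < n + 1 then x n else 0) = x ⌊r⌋₊ := by
  simp_rw [← Nat.floor_eq_iff hr]
  exact tsum_ite_eq' _ _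

lemma lintegral_mul_comp_eq_tsum {α : Type*} [MeasurableSpace α] {ν : Measure α} {φ : α → ℕ}
    (hφ : Measurable φ) {c : ℕ → ℝ≥0∞} (hc : ∀ n, c n ≠ ⊤) (g : α → ℝ≥0∞) :
    ∫⁻ x, c (φ x) * g x ∂ν = ∑' n, c n * ∫⁻ x in φ ⁻¹' {n}, g x ∂ν := by
  have hfiber : ∀ n, MeasurableSet (φ ⁻¹' {n}) := fun n => hφ (measurableSet_singleton n)
  calc ∫⁻ x, c (φ x) * g x ∂ν = ∑' n, ∫⁻ x in φ ⁻¹' {n}, c (φ x) * g x ∂ν := by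
        rw [← lintegral_iUnion hfiber (pairwise_disjoint_fiber φ), ← Set.preimage_iUnion,
          Set.iUnion_of_singleton, Set.preimage_univ, Measure.restrict_univ]
    _ = ∑' n, c n * ∫⁻ x in φ ⁻¹' {n}, g x ∂ν := tsum_congr fun n => by
        rw [setLIntegral_congr_fun (hfiber n) fun x (hx : φ x = n) => by rw [hx],
          lintegral_const_mul' _ _ (hc n)]

theorem radial_randomization_no_gain_general
    (Ω : Type) (mΩ : MeasurableSpace Ω) (μ : Measure Ω)
    (X : ℕ → Ω → ℝ) (hXmeas : ∀ n, Measurable (X n))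
    (hindep : iIndepFun X μ)
    (hgauss : ∀ n, Measure.map (X n) μ = gaussianReal 0 1)
    (s' : ℝ)
    (F : EuclideanSpace ℝ (Fin 3) → ℂ)
    (hHs' : (∫⁻ ξ : EuclideanSpace ℝ (Fin 3),
        ENNReal.ofReal ((1 + ‖ξ‖ ^ 2) ^ s' * ‖F ξ‖ ^ 2)) = ⊤) :
    ∀ᵐ ω ∂μ,
      (∫⁻ ξ : EuclideanSpace ℝ (Fin 3),
        ENNReal.ofReal ((1 + ‖ξ‖ ^ 2) ^ s' *
          ‖∑' n : ℕ, (if (n : ℝ) ≤ ‖ξ‖ ∧ ‖ξ‖ < n + 1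
              then ((X n ω : ℝ) : ℂ) else 0) * F ξ‖ ^ 2)) = ⊤ := by
  have := nullSingletonClass_gaussianReal (μ := 0) one_ne_zero
  have hshell : Measurable fun ξ : EuclideanSpace ℝ (Fin 3) => ⌊‖ξ‖⌋₊ := measurable_norm.nat_floor
  set h := fun ξ : EuclideanSpace ℝ (Fin 3) => ENNReal.ofReal ((1 + ‖ξ‖ ^ 2) ^ s' * ‖F ξ‖ ^ 2)
  have hsum : ∑' n, ∫⁻ ξ in (fun ξ => ⌊‖ξ‖⌋₊) ⁻¹' {n}, h ξ = ⊤ := by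
    rw [← hHs']
    simpa using (lintegral_mul_comp_eq_tsum hshell (fun _ => ENNReal.one_ne_top) h).symm
  filter_upwards [ae_tsum_ofReal_sq_mul_eq_top hXmeas hindep hgauss hsum] with ω hω
  rw [← hω, ← lintegral_mul_comp_eq_tsum hshell fun _ => ENNReal.ofReal_ne_top]
  congr with ξ
  rw [tsum_mul_right, tsum_ite_floor_eq (norm_nonneg ξ), norm_mul, Complex.norm_real,
    Real.norm_eq_abs, mul_pow, sq_abs, ← ENNReal.ofReal_mul (sq_nonneg _), mul_left_comm]

/-- No regularity gain for the radial randomization, stated on the Fourier side: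
if `F = \hat f` is radial, belongs to `H^s` but `‖f‖_{H^{s'}} = ∞` for some `s' > s`,
then almost surely `‖f^ω‖_{H^{s'}} = ∞`, where `f^ω` has Fourier transform
`Σ_n X_n 1_{[n,n+1)}(‖ξ‖) F(ξ)` with `(X_n)` independent standard Gaussians. -/
theorem radial_randomization_no_gain
    (Ω : Type) (mΩ : MeasurableSpace Ω) (μ : Measure Ω) [IsProbabilityMeasure μ]
    (X : ℕ → Ω → ℝ) (hXmeas : ∀ n, Measurable (X n))
    (hindep : iIndepFun X μ)
    (hgauss : ∀ n, Measure.map (X n) μ = gaussianReal 0 1)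
    (s s' : ℝ) (hs : s < s')
    (F : EuclideanSpace ℝ (Fin 3) → ℂ) (hFmeas : Measurable F)
    (hrad : ∀ ξ ξ' : EuclideanSpace ℝ (Fin 3), ‖ξ‖ = ‖ξ'‖ → F ξ = F ξ')
    (hHs : (∫⁻ ξ : EuclideanSpace ℝ (Fin 3),
        ENNReal.ofReal ((1 + ‖ξ‖ ^ 2) ^ s * ‖F ξ‖ ^ 2)) < ⊤)
    (hHs' : (∫⁻ ξ : EuclideanSpace ℝ (Fin 3),
        ENNReal.ofReal ((1 + ‖ξ‖ ^ 2) ^ s' * ‖F ξ‖ ^ 2)) = ⊤) :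
    ∀ᵐ ω ∂μ,
      (∫⁻ ξ : EuclideanSpace ℝ (Fin 3),
        ENNReal.ofReal ((1 + ‖ξ‖ ^ 2) ^ s' *
          ‖∑' n : ℕ, (if (n : ℝ) ≤ ‖ξ‖ ∧ ‖ξ‖ < n + 1
              then ((X n ω : ℝ) : ℂ) else 0) * F ξ‖ ^ 2)) = ⊤ :=
  radial_randomization_no_gain_general Ω mΩ μ X hXmeas hindep hgauss s' F hHs'
end

section
/- Let n ∈ ℕ with n ≥ 1 and let f ∈ L²_rad(ℝ³) have Fourier support in the annulus {ξ : |ξ| ∈ [n, n+1]}. Then ‖f‖_{L^∞(ℝ³)} ≲ n ‖f‖_{L²(ℝ³)}, with absolute implicit constant; consequently, for 2 ≤ p ≤ ∞, ‖f‖_{L^p(ℝ³)} ≲ n^{1-2/p} ‖f‖_{L²(ℝ³)}. -/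
/-!
Fourier inversion bounds `‖f‖_∞` by `‖𝓕 f‖_1`. The transform `𝓕 f` lives on an annulus of
volume `O(n²)`, so Cauchy–Schwarz on that annulus and Plancherel give
`‖𝓕 f‖_1 ≤ O(n) ‖𝓕 f‖_2 = O(n) ‖f‖_2`. The `L^p` bound then follows from the pointwise
estimate `|f|^p ≤ ‖f‖_∞^(p-2) |f|^2`.
-/

open MeasureTheory Real
open scoped RealInnerProductSpace ENNReal FourierTransform

theorem ENNReal.toReal_div_toReal_le_one_of_le {p q : ℝ≥0∞} (hqp : q ≤ p) :
    q.toReal / p.toReal ≤ 1 := by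
  rcases eq_or_ne p ∞ with rfl | hp
  · simp
  · exact div_le_one_of_le₀ (ENNReal.toReal_mono hp hqp) ENNReal.toReal_nonneg

namespace MeasureTheory

variable {α E : Type*} [MeasurableSpace α] {μ : Measure α} [NormedAddCommGroup E] {f : α → E}

/- For `p = ∞` the junk value `p.toReal = 0` turns the exponents into `1` and `0`, so that case
holds as well. -/
theorem eLpNorm_le_eLpNorm_top_rpow_mul_eLpNorm_rpow {p q : ℝ≥0∞}
    (hf : AEStronglyMeasurable f μ) (hq : q ≠ 0) (hqp : q ≤ p) :
    eLpNorm f p μ ≤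
      eLpNorm f ∞ μ ^ (1 - q.toReal / p.toReal) * eLpNorm f q μ ^ (q.toReal / p.toReal) := by
  rcases eq_or_ne p ∞ with rfl | hp
  · simp
  have hq' : q ≠ ∞ := ne_top_of_le_ne_top hp hqp
  have hq0 : 0 < q.toReal := ENNReal.toReal_pos hq hq'
  have hqp' : q.toReal ≤ p.toReal := ENNReal.toReal_mono hp hqp
  have hp0 : 0 < p.toReal := hq0.trans_le hqp'
  rw [eLpNorm_exponent_top]
  set M := eLpNormEssSup f μ
  have hpt : ∀ᵐ x ∂μ, ‖f x‖ₑ ^ p.toReal ≤ M ^ (p.toReal - q.toReal) * ‖f x‖ₑ ^ q.toReal := by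
    filter_upwards [enorm_ae_le_eLpNormEssSup f μ] with x hx
    rw [← sub_add_cancel p.toReal q.toReal,
      ENNReal.rpow_add_of_nonneg _ _ (sub_nonneg.2 hqp') hq0.le, add_sub_cancel_right]
    gcongr
  rw [eLpNorm_eq_lintegral_rpow_enorm_toReal (hq.bot_lt.trans_le hqp).ne' hp,
    eLpNorm_eq_lintegral_rpow_enorm_toReal hq hq']
  calc (∫⁻ x, ‖f x‖ₑ ^ p.toReal ∂μ) ^ (1 / p.toReal)
      ≤ (M ^ (p.toReal - q.toReal) * ∫⁻ x, ‖f x‖ₑ ^ q.toReal ∂μ) ^ (1 / p.toReal) := by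
        gcongr
        exact (lintegral_mono_ae hpt).trans_eq
          (lintegral_const_mul'' _ (hf.enorm.pow_const _))
    _ = M ^ (1 - q.toReal / p.toReal) *
          ((∫⁻ x, ‖f x‖ₑ ^ q.toReal ∂μ) ^ (1 / q.toReal)) ^ (q.toReal / p.toReal) := by
        rw [ENNReal.mul_rpow_of_nonneg _ _ (by positivity), ← ENNReal.rpow_mul,
          ← ENNReal.rpow_mul]
        congr 2 <;> field_simp

theorem eLpNorm_le_rpow_mul_eLpNorm_of_eLpNorm_top_le {p q a : ℝ≥0∞}
    (hf : AEStronglyMeasurable f μ) (hq : q ≠ 0) (hqp : q ≤ p)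
    (htop : eLpNorm f ∞ μ ≤ a * eLpNorm f q μ) :
    eLpNorm f p μ ≤ a ^ (1 - q.toReal / p.toReal) * eLpNorm f q μ := by
  have ht : 0 ≤ 1 - q.toReal / p.toReal :=
    sub_nonneg.2 (ENNReal.toReal_div_toReal_le_one_of_le hqp)
  calc eLpNorm f p μ
      ≤ eLpNorm f ∞ μ ^ (1 - q.toReal / p.toReal) * eLpNorm f q μ ^ (q.toReal / p.toReal) :=
        eLpNorm_le_eLpNorm_top_rpow_mul_eLpNorm_rpow hf hq hqp
    _ ≤ (a * eLpNorm f q μ) ^ (1 - q.toReal / p.toReal) *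
          eLpNorm f q μ ^ (q.toReal / p.toReal) := by
        gcongr
    _ = a ^ (1 - q.toReal / p.toReal) * eLpNorm f q μ := by
        rw [ENNReal.mul_rpow_of_nonneg _ _ ht, mul_assoc, ← ENNReal.rpow_add_of_nonneg _ _ ht
          (by positivity), sub_add_cancel, ENNReal.rpow_one]

theorem eLpNorm_le_eLpNorm_mul_measure_rpow_of_support_subset {s : Set α} {p q : ℝ≥0∞}
    (hpq : p ≤ q) (hf : AEStronglyMeasurable f μ) (hfs : f.support ⊆ s) :
    eLpNorm f p μ ≤ eLpNorm f q μ * μ s ^ (1 / p.toReal - 1 / q.toReal) := by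
  have := eLpNorm_le_eLpNorm_mul_rpow_measure_univ hpq (hf.restrict (s := s))
  rwa [eLpNorm_restrict_eq_of_support_subset hfs, eLpNorm_restrict_eq_of_support_subset hfs,
    Measure.restrict_apply_univ] at this

variable {F : Type*} [NormedAddCommGroup F] [NormedSpace ℝ F] [MeasurableSpace F] [BorelSpace F]
  [FiniteDimensional ℝ F] [Nontrivial F]

theorem Measure.addHaar_closedBall_diff_ball (μ : Measure F) [μ.IsAddHaarMeasure] (x : F)
    {r R : ℝ} (hr : 0 ≤ r) (hrR : r ≤ R) :
    μ (Metric.closedBall x R \ Metric.ball x r) =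
      ENNReal.ofReal (R ^ Module.finrank ℝ F - r ^ Module.finrank ℝ F) * μ (Metric.ball 0 1) := by
  rw [measure_sdiff (Metric.ball_subset_closedBall.trans (Metric.closedBall_subset_closedBall hrR))
      measurableSet_ball.nullMeasurableSet measure_ball_lt_top.ne,
    addHaar_closedBall μ x (hr.trans hrR), addHaar_ball μ x hr,
    ← ENNReal.sub_mul fun _ _ ↦ measure_ball_lt_top.ne, ENNReal.ofReal_sub _ (by positivity)]

end MeasureTheory

section Fourier

variable {V : Type*} [NormedAddCommGroup V] [InnerProductSpace ℝ V]
  [MeasurableSpace V] [BorelSpace V] [FiniteDimensional ℝ V]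
variable {H : Type*} [NormedAddCommGroup H] [InnerProductSpace ℂ H] [CompleteSpace H]

theorem integral_inner_fourier_eq_of_integrable {f g : V → H} (hf : Integrable f)
    (hg : Integrable g) :
    ∫ ξ, inner ℂ (𝓕 f ξ) (g ξ) = ∫ x, inner ℂ (f x) (𝓕⁻ g x) := by
  simpa [Real.fourierInv_eq, Real.fourier_eq, VectorFourier.fourierIntegral] using
    VectorFourier.integral_sesq_fourierIntegral_eq_neg_flip (innerSL ℂ)
      (L := innerₗ V) Real.continuous_fourierChar continuous_inner hf hg

theorem integral_norm_sq_fourier_of_integrable {f : V → H} (hc : Continuous f) (hf : Integrable f)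
    (hFf : Integrable (𝓕 f)) : ∫ ξ, ‖𝓕 f ξ‖ ^ 2 = ∫ x, ‖f x‖ ^ 2 := by
  apply Complex.ofRealLI.injective
  simpa [← LinearIsometry.integral_comp_comm, inner_self_eq_norm_sq_to_K,
    hc.fourierInv_fourier_eq hf hFf] using integral_inner_fourier_eq_of_integrable hf hFf

theorem enorm_le_eLpNorm_one_fourier {f : V → H} (hc : Continuous f) (hf : Integrable f)
    (hFf : Integrable (𝓕 f)) (x : V) : ‖f x‖ₑ ≤ eLpNorm (𝓕 f) 1 volume := by
  rw [eLpNorm_one_eq_lintegral_enorm, ← congrFun (hc.fourierInv_fourier_eq hf hFf) x,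
    Real.fourierInv_eq]
  refine (enorm_integral_le_lintegral_enorm _).trans_eq ?_
  simp_rw [← ofReal_norm, Circle.norm_smul]

theorem eLpNorm_fourier_two_eq {f : V → H} (hc : Continuous f) (hf : Integrable f)
    (hf2 : MemLp f 2) (hFf : Integrable (𝓕 f)) (hFf2 : MemLp (𝓕 f) 2) :
    eLpNorm (𝓕 f) 2 volume = eLpNorm f 2 volume := by
  rw [hf2.eLpNorm_eq_integral_rpow_norm two_ne_zero ENNReal.ofNat_ne_top,
    hFf2.eLpNorm_eq_integral_rpow_norm two_ne_zero ENNReal.ofNat_ne_top]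
  simp only [ENNReal.toReal_ofNat, Real.rpow_two, integral_norm_sq_fourier_of_integrable hc hf hFf]

theorem eLpNorm_top_le_of_support_fourier_subset {f : V → H} {K : Set V} (hc : Continuous f)
    (hf : Integrable f) (hf2 : MemLp f 2) (hK : IsCompact K) (hFK : (𝓕 f).support ⊆ K) :
    eLpNorm f ∞ volume ≤ volume K ^ (1 / 2 : ℝ) * eLpNorm f 2 volume := by
  have hFc : Continuous (𝓕 f) :=
    VectorFourier.fourierIntegral_continuous Real.continuous_fourierChar continuous_inner hf
  have hFcs : HasCompactSupport (𝓕 f) := .of_support_subset_isCompact hK hFK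
  have hFf : Integrable (𝓕 f) := hFc.integrable_of_hasCompactSupport hFcs
  calc eLpNorm f ∞ volume ≤ eLpNorm (𝓕 f) 1 volume := by
        rw [eLpNorm_exponent_top]
        exact eLpNormEssSup_le_of_ae_enorm_bound
          (.of_forall (enorm_le_eLpNorm_one_fourier hc hf hFf))
    _ ≤ eLpNorm (𝓕 f) 2 volume * volume K ^ (1 / 2 : ℝ) := by
        convert eLpNorm_le_eLpNorm_mul_measure_rpow_of_support_subset (p := 1) (q := 2) one_le_two
          hFc.aestronglyMeasurable hFK using 3
        norm_num
    _ = volume K ^ (1 / 2 : ℝ) * eLpNorm f 2 volume := by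
        rw [eLpNorm_fourier_two_eq hc hf hf2 hFf (hFc.memLp_of_hasCompactSupport hFcs), mul_comm]

theorem Real.fourier_eq_integral_exp_inner_two_pi_smul (f : V → ℂ) (w : V) :
    𝓕 f w = ∫ x, Complex.exp (-Complex.I * (⟪(2 * π) • w, x⟫ : ℝ)) * f x := by
  rw [Real.fourier_eq']
  congr 1 with x
  rw [smul_eq_mul, real_inner_smul_left, real_inner_comm]
  push_cast
  ring_nf

theorem support_fourier_subset_closedBall_diff_ball {f : V → ℂ} {a b : ℝ}
    (h : ∀ ξ : V, ∫ x, Complex.exp (-Complex.I * (⟪ξ, x⟫ : ℝ)) * f x ≠ 0 → ‖ξ‖ ∈ Set.Icc a b) :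
    (𝓕 f).support ⊆ Metric.closedBall 0 (b / (2 * π)) \ Metric.ball 0 (a / (2 * π)) := by
  intro w hw
  rw [Function.mem_support, Real.fourier_eq_integral_exp_inner_two_pi_smul] at hw
  obtain ⟨ha, hb⟩ := h _ hw
  rw [norm_smul, Real.norm_of_nonneg (by positivity)] at ha hb
  simp only [Set.mem_sdiff, Metric.mem_closedBall, Metric.mem_ball, dist_zero_right, not_lt]
  constructor
  · rw [le_div_iff₀ (by positivity)]; linarith
  · rw [div_le_iff₀ (by positivity)]; linarith

end Fourier

local notation "ℝ³" => EuclideanSpace ℝ (Fin 3)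

theorem volume_closedBall_diff_ball_le {n : ℕ} (hn : 1 ≤ n) :
    volume (Metric.closedBall (0 : ℝ³) ((n + 1) / (2 * π)) \ Metric.ball 0 (n / (2 * π))) ≤
      ENNReal.ofReal (7 * n ^ 2) * volume (Metric.ball (0 : ℝ³) 1) := by
  have h2π : 1 ≤ (2 * π) ^ 3 := one_le_pow₀ (by linarith [Real.pi_gt_three])
  have hn' : (1 : ℝ) ≤ n := by exact_mod_cast hn
  rw [Measure.addHaar_closedBall_diff_ball _ _ (by positivity) (by gcongr; linarith),
    finrank_euclideanSpace_fin]
  gcongr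
  calc (((n : ℝ) + 1) / (2 * π)) ^ 3 - (n / (2 * π)) ^ 3
        = (((n : ℝ) + 1) ^ 3 - n ^ 3) / (2 * π) ^ 3 := by
        rw [div_pow, div_pow, div_sub_div_same]
    _ ≤ ((n : ℝ) + 1) ^ 3 - n ^ 3 := div_le_self (by nlinarith) h2π
    _ ≤ 7 * n ^ 2 := by nlinarith

theorem exists_volume_closedBall_diff_ball_rpow_le : ∃ C : ℝ, 1 ≤ C ∧ ∀ n : ℕ, 1 ≤ n →
    volume (Metric.closedBall (0 : ℝ³) ((n + 1) / (2 * π)) \ Metric.ball 0 (n / (2 * π))) ^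
      (1 / 2 : ℝ) ≤ ENNReal.ofReal (C * n) := by
  set B := volume (Metric.ball (0 : ℝ³) 1)
  refine ⟨max 1 √(7 * B.toReal), le_max_left _ _, fun n hn ↦ ?_⟩
  calc _ ≤ (ENNReal.ofReal (7 * n ^ 2) * B) ^ (1 / 2 : ℝ) := by
        gcongr
        exact volume_closedBall_diff_ball_le hn
    _ = ENNReal.ofReal (√(7 * B.toReal) * n) := by
        have hB : B = ENNReal.ofReal B.toReal :=
          (ENNReal.ofReal_toReal measure_ball_lt_top.ne).symm
        conv_lhs => rw [hB]
        rw [← ENNReal.ofReal_mul (by positivity),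
          ENNReal.ofReal_rpow_of_nonneg (by positivity) (by norm_num), ← Real.sqrt_eq_rpow]
        congr 1
        rw [show 7 * (n : ℝ) ^ 2 * B.toReal = 7 * B.toReal * n ^ 2 by ring, Real.sqrt_mul
          (by positivity), Real.sqrt_sq (by positivity)]
    _ ≤ ENNReal.ofReal (max 1 √(7 * B.toReal) * n) := by
        gcongr
        exact le_max_right _ _

/-- Bernstein estimate on radial annuli: if `f ∈ L²_rad(ℝ³)` (continuous, integrable)
has Fourier transform supported in `{ξ : n ≤ ‖ξ‖ ≤ n+1}` with `n ≥ 1`, then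
`‖f‖_{L^∞} ≤ C n ‖f‖_{L²}` and, for `2 ≤ p ≤ ∞`, `‖f‖_{L^p} ≤ C n^{1-2/p} ‖f‖_{L²}`,
with an absolute constant `C`. -/
theorem radial_annulus_bernstein :
    ∃ C : ℝ, 0 < C ∧
      ∀ (n : ℕ), 1 ≤ n →
        ∀ (f : EuclideanSpace ℝ (Fin 3) → ℂ),
          Continuous f → Integrable f → MemLp f 2 →
          (∀ x y : EuclideanSpace ℝ (Fin 3), ‖x‖ = ‖y‖ → f x = f y) →
          (∀ ξ : EuclideanSpace ℝ (Fin 3),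
            (((2 * π) ^ (-(3:ℝ)/2) : ℝ) *
              ∫ x : EuclideanSpace ℝ (Fin 3),
                Complex.exp (-Complex.I * (⟪ξ, x⟫ : ℝ)) * f x) ≠ 0 →
            ‖ξ‖ ∈ Set.Icc (n : ℝ) (n + 1)) →
          eLpNorm f ⊤ volume ≤ ENNReal.ofReal (C * n) * eLpNorm f 2 volume ∧
          ∀ p : ℝ≥0∞, 2 ≤ p →
            eLpNorm f p volume
              ≤ ENNReal.ofReal (C * (n : ℝ) ^ (1 - 2 / p.toReal)) *
                  eLpNorm f 2 volume := by
  obtain ⟨C, hC, hvol⟩ := exists_volume_closedBall_diff_ball_rpow_le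
  refine ⟨C, one_pos.trans_le hC, fun n hn f hc hf hf2 _ hsupp ↦ ?_⟩
  have hK := support_fourier_subset_closedBall_diff_ball fun ξ hξ ↦
    hsupp ξ (mul_ne_zero (Complex.ofReal_ne_zero.2 (by positivity)) hξ)
  have htop : eLpNorm f ∞ volume ≤ ENNReal.ofReal (C * n) * eLpNorm f 2 volume :=
    (eLpNorm_top_le_of_support_fourier_subset hc hf hf2
      ((isCompact_closedBall _ _).diff Metric.isOpen_ball) hK).trans (by gcongr; exact hvol n hn)
  refine ⟨htop, fun p hp ↦ ?_⟩
  have ht : 0 ≤ 1 - 2 / p.toReal := by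
    simpa using sub_nonneg.2 (ENNReal.toReal_div_toReal_le_one_of_le hp)
  refine (eLpNorm_le_rpow_mul_eLpNorm_of_eLpNorm_top_le hc.aestronglyMeasurable two_ne_zero hp
    htop).trans ?_
  rw [ENNReal.toReal_ofNat, ENNReal.ofReal_rpow_of_nonneg (by positivity) ht,
    Real.mul_rpow (by positivity) (by positivity)]
  gcongr
  exact Real.rpow_le_self_of_one_le hC (sub_le_self _ (by positivity))
end
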